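/- arXiv:1705.05827 — 2 statements merged into one kernel-verified Lean document; each statement's English description precedes it below -/
import Mathlib

section
/- Let N be a normal subgroup of G and φ: G → G/N the canonical projection. Then 2S(G;L,R) is weakly connected if and only if 2S(G/N;φ(L),φ(R)) is weakly connected and every element of N is weakly connected to the identity within 2S(G;L,R). -/
open Relation

/-- `w` is a product of a list of `n` elements of `S`. -/
def IsWord {G : Type*} [Group G] (S : Set G) (n : ℕ) (w : G) : Prop :=
  ∃ l : List G, l.length = n ∧ (∀ x ∈ l, x ∈ S) ∧ l.prod = w

/-- The set of all positive-length words in `S`. -/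
def WordSet {G : Type*} [Group G] (S : Set G) : Set G :=
  {w | ∃ n : ℕ, 0 < n ∧ IsWord S n w}

/-- Arc of the two-sided group digraph `2S(G;L,R)`. -/
def Arc {G : Type*} [Group G] (L R : Set G) (g h : G) : Prop :=
  ∃ l ∈ L, ∃ r ∈ R, h = l⁻¹ * g * r

/-- Existence of a directed path (possibly of length 0). -/
def DPath {G : Type*} [Group G] (L R : Set G) : G → G → Prop :=
  ReflTransGen (Arc L R)

/-- Weak connectivity: path ignoring directions. -/
def WeakConn {G : Type*} [Group G] (L R : Set G) : G → G → Prop :=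
  ReflTransGen (fun g h => Arc L R g h ∨ Arc L R h g)

/-- Strong connectivity of two vertices. -/
def StrongConn {G : Type*} [Group G] (L R : Set G) (g h : G) : Prop :=
  DPath L R g h ∧ DPath L R h g

/-!
Both directions go through the projection `f : G →* G ⧸ N`. It maps arcs to arcs, so weak
connectivity descends. Conversely every arc of the quotient graph starting (or ending) at `f g`
lifts to an arc of `2S(G;L,R)` starting (or ending) at `g`, so a path in the quotient from `f g`
to `1` lifts to a path from `g` to some element of `N`, which is connected to `1` by hypothesis.
-/

theorem Relation.ReflTransGen.exists_lift {α β : Type*} {r : α → α → Prop} {s : β → β → Prop}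
    {f : α → β} (hlift : ∀ a y, s (f a) y → ∃ b, r a b ∧ f b = y) {a : α} {y : β}
    (h : ReflTransGen s (f a) y) : ∃ b, ReflTransGen r a b ∧ f b = y := by
  induction h with
  | refl => exact ⟨a, .refl, rfl⟩
  | tail _ hstep ih =>
    obtain ⟨b, hab, rfl⟩ := ih
    obtain ⟨c, hbc, rfl⟩ := hlift b _ hstep
    exact ⟨c, hab.tail hbc, rfl⟩

section

variable {G H : Type*} [Group G] [Group H] (f : G →* H) {L R : Set G}

theorem arc_image_iff {x y : H} :
    Arc (f '' L) (f '' R) x y ↔ ∃ l ∈ L, ∃ r ∈ R, y = (f l)⁻¹ * x * f r := by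
  simp only [Arc, Set.exists_mem_image]

theorem Arc.map {g h : G} (hgh : Arc L R g h) : Arc (f '' L) (f '' R) (f g) (f h) := by
  obtain ⟨l, hl, r, hr, rfl⟩ := hgh
  exact (arc_image_iff f).2 ⟨l, hl, r, hr, by simp⟩

theorem Arc.exists_lift_of_source {g : G} {y : H} (hy : Arc (f '' L) (f '' R) (f g) y) :
    ∃ h, Arc L R g h ∧ f h = y := by
  obtain ⟨l, hl, r, hr, rfl⟩ := (arc_image_iff f).1 hy
  exact ⟨l⁻¹ * g * r, ⟨l, hl, r, hr, rfl⟩, by simp⟩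

theorem Arc.exists_lift_of_target {g : G} {y : H} (hy : Arc (f '' L) (f '' R) y (f g)) :
    ∃ h, Arc L R h g ∧ f h = y := by
  obtain ⟨l, hl, r, hr, hg⟩ := (arc_image_iff f).1 hy
  refine ⟨l * g * r⁻¹, ⟨l, hl, r, hr, by group⟩, ?_⟩
  simp [hg, mul_assoc]

theorem WeakConn.symm {g h : G} (hgh : WeakConn L R g h) : WeakConn L R h g :=
  have : Std.Symm fun g h : G => Arc L R g h ∨ Arc L R h g := ⟨fun _ _ => Or.symm⟩
  symm_of (ReflTransGen _) hgh

theorem WeakConn.map {g h : G} (hgh : WeakConn L R g h) :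
    WeakConn (f '' L) (f '' R) (f g) (f h) :=
  ReflTransGen.lift f (fun _ _ => Or.imp (Arc.map f) (Arc.map f)) g h hgh

theorem WeakConn.exists_lift {g : G} {y : H} (hy : WeakConn (f '' L) (f '' R) (f g) y) :
    ∃ h, WeakConn L R g h ∧ f h = y := by
  refine ReflTransGen.exists_lift (fun a y hay => ?_) hy
  rcases hay with hay | hya
  · obtain ⟨b, hab, rfl⟩ := hay.exists_lift_of_source f
    exact ⟨b, .inl hab, rfl⟩
  · obtain ⟨b, hba, rfl⟩ := hya.exists_lift_of_target f
    exact ⟨b, .inr hba, rfl⟩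

theorem forall_weakConn_iff_of_surjective (hf : Function.Surjective f) :
    (∀ g h : G, WeakConn L R g h) ↔
      (∀ x y : H, WeakConn (f '' L) (f '' R) x y) ∧ ∀ k ∈ f.ker, WeakConn L R k 1 := by
  refine ⟨fun hG => ⟨hf.forall₂.2 fun g h => (hG g h).map f, fun k _ => hG k 1⟩, ?_⟩
  rintro ⟨hH, hker⟩
  have hone : ∀ g, WeakConn L R g 1 := fun g => by
    obtain ⟨k, hgk, hk⟩ := (hH (f g) 1).exists_lift f
    exact hgk.trans (hker k hk)
  exact fun g h => (hone g).trans (hone h).symm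

end

theorem stmt_16_general {G : Type*} [Group G] (N : Subgroup G) [N.Normal]
    (L R : Set G) :
    (∀ g h : G, WeakConn L R g h) ↔
      ((∀ x y : G ⧸ N, Relation.ReflTransGen (fun a b : G ⧸ N =>
          (∃ l ∈ L, ∃ r ∈ R, b = ((l : G ⧸ N))⁻¹ * a * (r : G ⧸ N)) ∨
          (∃ l ∈ L, ∃ r ∈ R, a = ((l : G ⧸ N))⁻¹ * b * (r : G ⧸ N))) x y) ∧
       ∀ h ∈ N, WeakConn L R h 1) := by
  have := forall_weakConn_iff_of_surjective (QuotientGroup.mk' N) (L := L) (R := R)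
    (QuotientGroup.mk'_surjective N)
  simpa only [WeakConn, arc_image_iff, QuotientGroup.mk'_apply, QuotientGroup.ker_mk'] using this

theorem stmt_16 {G : Type*} [Group G] (N : Subgroup G) [N.Normal]
    (L R : Set G) (hL : L.Nonempty) (hR : R.Nonempty) :
    (∀ g h : G, WeakConn L R g h) ↔
      ((∀ x y : G ⧸ N, Relation.ReflTransGen (fun a b : G ⧸ N =>
          (∃ l ∈ L, ∃ r ∈ R, b = ((l : G ⧸ N))⁻¹ * a * (r : G ⧸ N)) ∨
          (∃ l ∈ L, ∃ r ∈ R, a = ((l : G ⧸ N))⁻¹ * b * (r : G ⧸ N))) x y) ∧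
       ∀ h ∈ N, WeakConn L R h 1) :=
  stmt_16_general N L R
end

section
/- Suppose W(L) and W(R) are subgroups of a group G, G = W(L)·W(R), and the minimum strong connection length k of G relative to (L,R) is finite. Then 2S(G;L,R) has exactly k strongly connected components, all of the same cardinality. -/
open Relation Pointwise

/-!
Write `g = p⁻¹ q` with `p` an `L`-word of length `a` and `q` an `R`-word of length `b`, and call
`b - a` a level of `g`. An arc `g → l⁻¹ g r` preserves levels, and, because `W(L)` and `W(R)` are
groups, the levels of one vertex differ by elements of the additive group `M ⊆ ℤ` of differences
`b - a` of the lengths of a common `L`-word and `R`-word; conversely two vertices whose levels agree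
modulo `M` are joined by a path. So the strong components are the fibres of the level map
`G → ℤ ⧸ M`. The minimal strong connection length is the least positive element of `M`, hence
`M = kℤ`, and right multiplication by a power of some `r₀ ∈ R` shifts levels by its exponent,
so all `k` fibres are equinumerous.
-/

theorem Int.neg_mem_of_pos_mem_of_neg_mem {S : AddSubmonoid ℤ} {a b : ℤ} (ha : 0 < a)
    (hb : b < 0) (haS : a ∈ S) (hbS : b ∈ S) {n : ℤ} (hn : n ∈ S) : -n ∈ S := by
  rcases le_or_gt 0 n with h | h
  · lift n to ℕ using h
    obtain ⟨c, rfl⟩ : ∃ c : ℕ, b = -(c + 1) := ⟨(-b - 1).toNat, by omega⟩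
    convert add_mem (nsmul_mem hn c) (nsmul_mem hbS n) using 1
    simp only [nsmul_eq_mul]; ring
  · obtain ⟨m, rfl⟩ : ∃ m : ℕ, n = -m := ⟨(-n).toNat, by omega⟩
    obtain ⟨c, rfl⟩ : ∃ c : ℕ, a = c + 1 := ⟨(a - 1).toNat, by omega⟩
    convert add_mem (nsmul_mem hn c) (nsmul_mem haS m) using 1
    simp only [nsmul_eq_mul]; ring

theorem Int.mem_addSubmonoid_iff_dvd {S : AddSubmonoid ℤ} (hneg : ∀ n ∈ S, -n ∈ S) {k : ℕ}
    (hk : IsLeast {n : ℕ | 0 < n ∧ (n : ℤ) ∈ S} k) (n : ℤ) : n ∈ S ↔ (k : ℤ) ∣ n := by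
  let H : AddSubgroup ℤ := { S with neg_mem' := hneg _ }
  have hHk : IsLeast {m : ℤ | m ∈ H ∧ 0 < m} k := by
    refine ⟨⟨hk.1.2, by exact_mod_cast hk.1.1⟩, fun m ⟨hmH, hm⟩ => ?_⟩
    lift m to ℕ using hm.le
    exact_mod_cast hk.2 ⟨by exact_mod_cast hm, hmH⟩
  change n ∈ H ↔ _
  rw [AddSubgroup.cyclic_of_min hHk, ← AddSubgroup.zmultiples_eq_closure, Int.mem_zmultiples_iff]

section Words

variable {G : Type*} [Group G] {S : Set G} {m n : ℕ} {u w : G}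

theorem IsWord.zero_iff : IsWord S 0 w ↔ w = 1 := by
  refine ⟨fun ⟨l, hl, _, hp⟩ => ?_, fun h => ⟨[], rfl, by simp, h.symm⟩⟩
  rw [List.length_eq_zero_iff] at hl
  simp [← hp, hl]

theorem IsWord.one (S : Set G) : IsWord S 0 (1 : G) := IsWord.zero_iff.2 rfl

theorem IsWord.mul (hu : IsWord S m u) (hw : IsWord S n w) : IsWord S (m + n) (u * w) := by
  obtain ⟨l₁, rfl, hl₁, rfl⟩ := hu
  obtain ⟨l₂, rfl, hl₂, rfl⟩ := hw
  exact ⟨l₁ ++ l₂, List.length_append, by simpa [or_imp, forall_and] using ⟨hl₁, hl₂⟩,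
    List.prod_append⟩

theorem IsWord.inv (hw : IsWord S n w) : IsWord S⁻¹ n w⁻¹ := by
  obtain ⟨l, rfl, hl, rfl⟩ := hw
  refine ⟨(l.map (·⁻¹)).reverse, by simp, ?_, (List.prod_inv_reverse l).symm⟩
  simp only [List.mem_reverse, List.mem_map]
  rintro _ ⟨s, hs, rfl⟩
  exact Set.inv_mem_inv.2 (hl s hs)

theorem IsWord.of_inv (hw : IsWord S⁻¹ n w) : IsWord S n w⁻¹ := by
  simpa using hw.inv

theorem IsWord.pow {s : G} (hs : s ∈ S) (n : ℕ) : IsWord S n (s ^ n) :=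
  ⟨List.replicate n s, List.length_replicate, fun _ hx => List.eq_of_mem_replicate hx ▸ hs,
    List.prod_replicate n s⟩

theorem IsWord.single {s : G} (hs : s ∈ S) : IsWord S 1 s := by
  simpa using IsWord.pow hs 1

theorem IsWord.succ_iff : IsWord S (n + 1) w ↔ ∃ s ∈ S, ∃ u, IsWord S n u ∧ w = s * u := by
  constructor
  · rintro ⟨_ | ⟨s, l⟩, hl, hS, rfl⟩
    · simp at hl
    · exact ⟨s, hS s (by simp), l.prod, ⟨l, by simpa using hl, fun x hx => hS x (by simp [hx]),
        rfl⟩, List.prod_cons⟩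
  · rintro ⟨s, hs, u, hu, rfl⟩
    simpa [add_comm] using (IsWord.single hs).mul hu

theorem exists_isWord_inv (hS : ∃ H : Subgroup G, WordSet S = (H : Set G)) (hw : IsWord S n w) :
    ∃ m, IsWord S m w⁻¹ := by
  rcases n.eq_zero_or_pos with rfl | hn
  · exact ⟨0, by simpa [IsWord.zero_iff.1 hw] using IsWord.one S⟩
  obtain ⟨H, hH⟩ := hS
  have hwH : w ∈ (H : Set G) := hH ▸ ⟨n, hn, hw⟩
  obtain ⟨m, -, hm⟩ : w⁻¹ ∈ WordSet S := hH ▸ H.inv_mem hwH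
  exact ⟨m, hm⟩

theorem exists_isWord_one (hS : ∃ H : Subgroup G, WordSet S = (H : Set G)) :
    ∃ n, 0 < n ∧ IsWord S n (1 : G) := by
  obtain ⟨H, hH⟩ := hS
  change (1 : G) ∈ WordSet S
  exact hH ▸ H.one_mem

end Words

section Levels

variable {G : Type*} [Group G] {L R : Set G} {g h u w : G} {a b : ℕ} {m n : ℤ}

theorem dPath_iff : DPath L R g h ↔ ∃ n u w, IsWord L n u ∧ IsWord R n w ∧ h = u⁻¹ * g * w := by
  constructor
  · intro hgh
    induction hgh with
    | refl => exact ⟨0, 1, 1, .one L, .one R, by simp⟩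
    | tail _ harc ih =>
      obtain ⟨n, u, w, hu, hw, rfl⟩ := ih
      obtain ⟨l, hl, r, hr, rfl⟩ := harc
      exact ⟨n + 1, u * l, w * r, hu.mul (.single hl), hw.mul (.single hr), by group⟩
  · rintro ⟨n, u, w, hu, hw, rfl⟩
    induction n generalizing g u w with
    | zero =>
      rw [IsWord.zero_iff.1 hu, IsWord.zero_iff.1 hw, inv_one, one_mul, mul_one]
      exact ReflTransGen.refl
    | succ n ih =>
      obtain ⟨l, hl, u', hu', rfl⟩ := IsWord.succ_iff.1 hu
      obtain ⟨r, hr, w', hw', rfl⟩ := IsWord.succ_iff.1 hw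
      rw [show (l * u')⁻¹ * g * (r * w') = u'⁻¹ * (l⁻¹ * g * r) * w' by group]
      exact ReflTransGen.head ⟨l, hl, r, hr, rfl⟩ (ih u' w' hu' hw')

variable (L R) in
def IsLevel (g : G) (m : ℤ) : Prop :=
  ∃ (a b : ℕ) (p q : G), IsWord L a p ∧ IsWord R b q ∧ g = p⁻¹ * q ∧ m = b - a

variable (L R) in
def lengthDiffs : AddSubmonoid ℤ where
  carrier := {m | ∃ (a b : ℕ) (v : G), IsWord L a v ∧ IsWord R b v ∧ m = b - a}
  zero_mem' := ⟨0, 0, 1, .one L, .one R, rfl⟩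
  add_mem' := by
    rintro _ _ ⟨a, b, v, hav, hbv, rfl⟩ ⟨a', b', v', hav', hbv', rfl⟩
    exact ⟨a + a', b + b', v * v', hav.mul hav', hbv.mul hbv', by push_cast; ring⟩

theorem sub_mem_lengthDiffs_of_isWord {v : G} (ha : IsWord L a v) (hb : IsWord R b v) :
    (b : ℤ) - a ∈ lengthDiffs L R :=
  ⟨a, b, v, ha, hb, rfl⟩

theorem IsLevel.one : IsLevel L R 1 0 := ⟨0, 0, 1, 1, .one L, .one R, by simp, by simp⟩

theorem IsLevel.translate (hg : IsLevel L R g m) (hu : IsWord L a u) (hw : IsWord R b w) :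
    IsLevel L R (u⁻¹ * g * w) (m + b - a) := by
  obtain ⟨a', b', p, q, hp, hq, rfl, rfl⟩ := hg
  exact ⟨a' + a, b' + b, p * u, q * w, hp.mul hu, hq.mul hw, by group, by push_cast; ring⟩

theorem exists_isLevel (hWL : ∃ H : Subgroup G, WordSet L = (H : Set G))
    (hG : WordSet L * WordSet R = Set.univ) (g : G) : ∃ m, IsLevel L R g m := by
  obtain ⟨x, ⟨a, -, hx⟩, y, ⟨b, -, hy⟩, rfl⟩ : g ∈ WordSet L * WordSet R := hG ▸ trivial
  obtain ⟨a', hx'⟩ := exists_isWord_inv hWL hx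
  exact ⟨b - a', a', b, x⁻¹, y, hx', hy, by simp, rfl⟩

section WordSubgroups

variable (hWL : ∃ H : Subgroup G, WordSet L = (H : Set G))
  (hWR : ∃ H : Subgroup G, WordSet R = (H : Set G))
include hWL hWR

theorem lengthDiffs_neg_mem (hm : m ∈ lengthDiffs L R) : -m ∈ lengthDiffs L R := by
  obtain ⟨c, hc, hcL⟩ := exists_isWord_one hWL
  obtain ⟨d, hd, hdR⟩ := exists_isWord_one hWR
  refine Int.neg_mem_of_pos_mem_of_neg_mem (a := d) (b := -c) (by omega) (by omega) ?_ ?_ hm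
  · simpa using sub_mem_lengthDiffs_of_isWord (.one L) hdR
  · simpa using sub_mem_lengthDiffs_of_isWord hcL (.one R)

theorem lengthDiffs_sub_mem (hm : m ∈ lengthDiffs L R) (hn : n ∈ lengthDiffs L R) :
    m - n ∈ lengthDiffs L R := by
  simpa [sub_eq_add_neg] using add_mem hm (lengthDiffs_neg_mem hWL hWR hn)

theorem IsLevel.sub_mem (hm : IsLevel L R g m) (hn : IsLevel L R g n) :
    m - n ∈ lengthDiffs L R := by
  obtain ⟨a, b, p, q, hp, hq, rfl, rfl⟩ := hm
  obtain ⟨a', b', p', q', hp', hq', hpq, rfl⟩ := hn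
  obtain ⟨a₁, hp₁⟩ := exists_isWord_inv hWL hp
  obtain ⟨b₁, hq₁⟩ := exists_isWord_inv hWR hq
  have hz : p' * p⁻¹ = q' * q⁻¹ := calc
    p' * p⁻¹ = p' * (p⁻¹ * q) * q⁻¹ := by group
    _ = q' * q⁻¹ := by rw [hpq]; group
  have hzM := sub_mem_lengthDiffs_of_isWord (hp'.mul hp₁) (hz ▸ hq'.mul hq₁)
  have hRM := sub_mem_lengthDiffs_of_isWord (.one L) (by simpa using hq.mul hq₁)
  have hLM := sub_mem_lengthDiffs_of_isWord (by simpa using hp.mul hp₁) (.one R)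
  convert lengthDiffs_sub_mem hWL hWR (add_mem hRM hLM) hzM using 1
  push_cast; ring

theorem dPath_of_isLevel (hg : IsLevel L R g m) (hh : IsLevel L R h n)
    (hmn : m - n ∈ lengthDiffs L R) : DPath L R g h := by
  obtain ⟨a, b, p, q, hp, hq, rfl, rfl⟩ := hg
  obtain ⟨a', b', p', q', hp', hq', rfl, rfl⟩ := hh
  obtain ⟨a₁, hp₁⟩ := exists_isWord_inv hWL hp
  obtain ⟨b₁, hq₁⟩ := exists_isWord_inv hWR hq
  have hLM := lengthDiffs_neg_mem hWL hWR <|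
    sub_mem_lengthDiffs_of_isWord (by simpa using hp.mul hp₁) (.one R)
  have hRM := lengthDiffs_neg_mem hWL hWR <|
    sub_mem_lengthDiffs_of_isWord (.one L) (by simpa using hq.mul hq₁)
  -- `v` is chosen so that `p⁻¹ v p'` and `q⁻¹ v q'` have the same length
  obtain ⟨α, β, v, hvL, hvR, hv⟩ : ((a₁ + a' : ℕ) : ℤ) - (b₁ + b' : ℕ) ∈ lengthDiffs L R := by
    convert add_mem (add_mem hLM hRM) hmn using 1
    push_cast; ring
  have hlen : a₁ + α + a' = b₁ + β + b' := by push_cast at hv; omega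
  refine dPath_iff.2 ⟨_, p⁻¹ * v * p', q⁻¹ * v * q', (hp₁.mul hvL).mul hp', ?_, by group⟩
  exact hlen ▸ (hq₁.mul hvR).mul hq'

theorem strongConn_iff_sub_mem (hg : IsLevel L R g m) (hh : IsLevel L R h n) :
    StrongConn L R g h ↔ m - n ∈ lengthDiffs L R := by
  refine ⟨fun hgh => ?_, fun hmn => ⟨dPath_of_isLevel hWL hWR hg hh hmn,
    dPath_of_isLevel hWL hWR hh hg (by simpa using lengthDiffs_neg_mem hWL hWR hmn)⟩⟩
  obtain ⟨N, u, w, hu, hw, rfl⟩ := dPath_iff.1 hgh.1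
  simpa using (hg.translate hu hw).sub_mem hWL hWR hh

theorem setOf_strongConn_one_eq (hG : WordSet L * WordSet R = Set.univ) (hR : R.Nonempty) :
    {n : ℕ | 0 < n ∧ ∃ v : G,
        (IsWord L n v ∨ IsWord L⁻¹ n v ∨ IsWord R n v ∨ IsWord R⁻¹ n v) ∧ StrongConn L R v 1} =
      {n : ℕ | 0 < n ∧ (n : ℤ) ∈ lengthDiffs L R} := by
  ext n
  refine and_congr_right fun _ => ⟨?_, fun hn => ?_⟩
  · rintro ⟨v, hv, hv1⟩
    have hmem : ∀ {m}, IsLevel L R v m → m ∈ lengthDiffs L R := fun hm => by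
      simpa using (strongConn_iff_sub_mem hWL hWR hm .one).1 hv1
    have hmem_one : ∀ {m}, IsLevel L R 1 m → m ∈ lengthDiffs L R := fun hm => by
      simpa using hm.sub_mem hWL hWR .one
    obtain ⟨m, hm⟩ := exists_isLevel hWL hG v
    rcases hv with hv | hv | hv | hv
    · have hmn := hmem_one (by simpa using hm.translate hv (.one R))
      simpa using lengthDiffs_sub_mem hWL hWR (hmem hm) hmn
    · have hn : -(n : ℤ) ∈ lengthDiffs L R :=
        hmem (by simpa using IsLevel.one.translate hv.of_inv (.one R))
      simpa using lengthDiffs_neg_mem hWL hWR hn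
    · exact hmem (by simpa using IsLevel.one.translate (.one L) hv)
    · have hmn := hmem_one (by simpa using hm.translate (.one L) hv.of_inv)
      simpa using lengthDiffs_sub_mem hWL hWR hmn (hmem hm)
  · obtain ⟨r, hr⟩ := hR
    refine ⟨r ^ n, Or.inr (Or.inr (Or.inl (.pow hr n))), ?_⟩
    refine (strongConn_iff_sub_mem hWL hWR ?_ .one).2 (by simpa using hn)
    simpa using IsLevel.one.translate (.one L) (.pow hr n)

theorem strongConn_iff_intCast_eq {k : ℕ} (hk : ∀ n : ℤ, n ∈ lengthDiffs L R ↔ (k : ℤ) ∣ n)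
    (hg : IsLevel L R g m) (hh : IsLevel L R h n) : StrongConn L R g h ↔ (m : ZMod k) = n := by
  rw [strongConn_iff_sub_mem hWL hWR hg hh, hk, ZMod.intCast_eq_intCast_iff_dvd_sub,
    dvd_sub_comm]

end WordSubgroups

end Levels

section Fibres

variable {α β : Type*} (f : α → β)

theorem nonempty_setOf_fibres_equiv (hf : Function.Surjective f) :
    Nonempty ({C : Set α | ∃ g, C = {h | f g = f h}} ≃ β) := by
  have hfibre : ∀ b, ∃ g, f ⁻¹' {b} = {h | f g = f h} := fun b =>
    (hf b).imp fun g hg => by ext; simp [hg, eq_comm]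
  refine ⟨(Equiv.ofBijective (fun b => ⟨f ⁻¹' {b}, hfibre b⟩) ⟨fun b b' hbb' => ?_, ?_⟩).symm⟩
  · exact Set.singleton_injective (Set.preimage_injective.2 hf (congrArg Subtype.val hbb'))
  · rintro ⟨C, g, rfl⟩
    exact ⟨f g, Subtype.ext (by ext; simp [eq_comm])⟩

variable [AddGroup β] (hshift : ∀ d : β, ∃ e : α ≃ α, ∀ x, f (e x) = f x + d)
include hshift

theorem surjective_of_forall_shift [Nonempty α] : Function.Surjective f := by
  intro b
  let x₀ := Classical.arbitrary α
  obtain ⟨e, he⟩ := hshift (-f x₀ + b)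
  exact ⟨e x₀, by rw [he, add_neg_cancel_left]⟩

theorem nonempty_fibres_equiv_of_forall_shift :
    ∀ C ∈ {C : Set α | ∃ g, C = {h | f g = f h}},
      ∀ D ∈ {C : Set α | ∃ g, C = {h | f g = f h}}, Nonempty (C ≃ D) := by
  rintro _ ⟨g, rfl⟩ _ ⟨g', rfl⟩
  obtain ⟨d, hd⟩ : ∃ d, f g' = f g + d := ⟨-f g + f g', (add_neg_cancel_left _ _).symm⟩
  obtain ⟨e, he⟩ := hshift d
  refine ⟨e.subtypeEquiv fun x => ?_⟩
  change f g = f x ↔ f g' = f (e x)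
  rw [he, hd, add_left_inj]

end Fibres

theorem stmt_19_general {G : Type*} [Group G] (L R : Set G) (hR : R.Nonempty)
    (hWL : ∃ H : Subgroup G, WordSet L = (H : Set G))
    (hWR : ∃ H : Subgroup G, WordSet R = (H : Set G))
    (hG : WordSet L * WordSet R = Set.univ)
    (k : ℕ)
    (hk : IsLeast {n : ℕ | 0 < n ∧ ∃ v : G,
        (IsWord L n v ∨ IsWord L⁻¹ n v ∨ IsWord R n v ∨ IsWord R⁻¹ n v) ∧
        StrongConn L R v 1} k) :
    Nonempty ({C : Set G | ∃ g : G, C = {h | StrongConn L R g h}} ≃ Fin k) ∧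
    ∀ C ∈ {C : Set G | ∃ g : G, C = {h | StrongConn L R g h}},
      ∀ D ∈ {C : Set G | ∃ g : G, C = {h | StrongConn L R g h}},
        Nonempty (C ≃ D) := by
  rw [setOf_strongConn_one_eq hWL hWR hG hR] at hk
  have hM := Int.mem_addSubmonoid_iff_dvd (fun _ => lengthDiffs_neg_mem hWL hWR) hk
  have : NeZero k := ⟨hk.1.1.ne'⟩
  choose lv hlv using exists_isLevel hWL hG
  have hSC (g h : G) : StrongConn L R g h ↔ (lv g : ZMod k) = lv h :=
    strongConn_iff_intCast_eq hWL hWR hM (hlv g) (hlv h)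
  obtain ⟨r, hr⟩ := hR
  have hshift (d : ZMod k) : ∃ e : G ≃ G, ∀ x, (lv (e x) : ZMod k) = lv x + d := by
    obtain ⟨i, rfl⟩ := ZMod.natCast_zmod_surjective d
    refine ⟨Equiv.mulRight (r ^ i), fun x => ?_⟩
    have hxi : IsLevel L R (x * r ^ i) (lv x + i) := by
      simpa using (hlv x).translate (.one L) (.pow hr i)
    exact_mod_cast (strongConn_iff_intCast_eq hWL hWR hM (hlv _) hxi).1 ⟨.refl, .refl⟩
  simp only [hSC]
  let f : G → ZMod k := fun g => lv g
  obtain ⟨e⟩ := nonempty_setOf_fibres_equiv f (surjective_of_forall_shift f hshift)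
  exact ⟨⟨e.trans (ZMod.finEquiv k).symm.toEquiv⟩, nonempty_fibres_equiv_of_forall_shift f hshift⟩

theorem stmt_19 {G : Type*} [Group G] (L R : Set G) (hL : L.Nonempty) (hR : R.Nonempty)
    (hWL : ∃ H : Subgroup G, WordSet L = (H : Set G))
    (hWR : ∃ H : Subgroup G, WordSet R = (H : Set G))
    (hG : WordSet L * WordSet R = Set.univ)
    (k : ℕ)
    (hk : IsLeast {n : ℕ | 0 < n ∧ ∃ v : G,
        (IsWord L n v ∨ IsWord L⁻¹ n v ∨ IsWord R n v ∨ IsWord R⁻¹ n v) ∧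
        StrongConn L R v 1} k) :
    Nonempty ({C : Set G | ∃ g : G, C = {h | StrongConn L R g h}} ≃ Fin k) ∧
    ∀ C ∈ {C : Set G | ∃ g : G, C = {h | StrongConn L R g h}},
      ∀ D ∈ {C : Set G | ∃ g : G, C = {h | StrongConn L R g h}},
        Nonempty (C ≃ D) :=
  stmt_19_general L R hR hWL hWR hG k hk
end
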